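/- Let λ > 0 and let ψ : ℝ⁴ → ℂ, A = (A₁,…,A₄) : ℝ⁴ → ℝ⁴, and ξ : ℝ⁴ → ℝ be smooth, satisfying the gauge-augmented Ginzburg–Landau system: −Δ_Aψ + (λ/2)(|ψ|² − 1)ψ + i ξ ψ = 0 on ℝ⁴, and (d*dA)ⱼ − Im((∂ⱼψ − iAⱼψ)·conj(ψ)) + ∂ⱼξ = 0 on ℝ⁴ for j = 1,…,4. Then ξ satisfies Δξ = |ψ|² ξ on ℝ⁴. -/

import Mathlib

/-! Taking the divergence of the second equation removes `d*dA`, since `∂ⱼ∂ₖ` is symmetric while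
the curl `∂ₖAⱼ - ∂ⱼAₖ` is antisymmetric; hence `Δξ = Σⱼ ∂ⱼ Im (Dⱼψ · ψ̄)` with `Dⱼ = ∂ⱼ - iAⱼ`.
By the Leibniz rule `∂ⱼ (Dⱼψ · ψ̄) = DⱼDⱼψ · ψ̄ + |Dⱼψ|²`, and `Σⱼ DⱼDⱼ = Δ_A`, so this divergence
is `Im (Δ_A ψ · ψ̄)`, which the first equation evaluates to `ξ |ψ|²`. -/

noncomputable section

open Complex MeasureTheory

/-- ℝ⁴ with the Euclidean structure. -/
abbrev R4 : Type := EuclideanSpace ℝ (Fin 4)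

/-- Standard basis vectors of ℝ⁴. -/
def bvec (j : Fin 4) : R4 := EuclideanSpace.single j 1

/-- `j`-th partial derivative. -/
def pd {E : Type*} [NormedAddCommGroup E] [NormedSpace ℝ E]
    (j : Fin 4) (f : R4 → E) (x : R4) : E :=
  fderiv ℝ f x (bvec j)

/-- Euclidean Laplacian Δf = Σⱼ ∂ⱼ∂ⱼ f. -/
def lap {E : Type*} [NormedAddCommGroup E] [NormedSpace ℝ E]
    (f : R4 → E) (x : R4) : E :=
  ∑ j, pd j (pd j f) x

/-- The covariant Laplacian Δ_A ψ = Δψ − i (div A) ψ − 2i Σⱼ Aⱼ ∂ⱼψ − |A|² ψ. -/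
def covLap (A : R4 → R4) (ψ : R4 → ℂ) (x : R4) : ℂ :=
  lap ψ x - Complex.I * (↑(∑ j, pd j (fun y => A y j) x)) * ψ x
    - 2 * Complex.I * ∑ j, (↑(A x j) : ℂ) * pd j ψ x
    - (↑(∑ j, (A x j) ^ 2) : ℂ) * ψ x

/-- (d*dA)ⱼ = −Σₖ ∂ₖ(∂ₖAⱼ − ∂ⱼAₖ). -/
def dStarDA (A : R4 → R4) (j : Fin 4) (x : R4) : ℝ :=
  - ∑ k, pd k (fun y => pd k (fun z => A z j) y - pd j (fun z => A z k) y) x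

open scoped ComplexConjugate

section PartialDerivatives

variable {E F : Type*} [NormedAddCommGroup E] [NormedSpace ℝ E]
  [NormedAddCommGroup F] [NormedSpace ℝ F] {f g : R4 → E} {x : R4}

theorem pd_clm_comp (j : Fin 4) (L : E →L[ℝ] F) (hf : DifferentiableAt ℝ f x) :
    pd j (fun y => L (f y)) x = L (pd j f x) := by
  have hL : HasFDerivAt (fun y => L (f y)) (L.comp (fderiv ℝ f x)) x :=
    L.hasFDerivAt.comp x hf.hasFDerivAt
  simp only [pd, hL.fderiv, ContinuousLinearMap.comp_apply]

theorem pd_sub (j : Fin 4) (hf : DifferentiableAt ℝ f x) (hg : DifferentiableAt ℝ g x) :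
    pd j (fun y => f y - g y) x = pd j f x - pd j g x := by
  simp [pd, fderiv_fun_sub hf hg]

theorem pd_neg (j : Fin 4) (f : R4 → E) : pd j (-f) = -pd j f := by
  ext x
  simp [pd, fderiv_neg]

theorem pd_sum {ι : Type*} (s : Finset ι) (j : Fin 4) {f : ι → R4 → E}
    (hf : ∀ i ∈ s, DifferentiableAt ℝ (f i) x) :
    pd j (fun y => ∑ i ∈ s, f i y) x = ∑ i ∈ s, pd j (f i) x := by
  simp [pd, fderiv_fun_sum hf]

theorem pd_mul {𝔸 : Type*} [NormedCommRing 𝔸] [NormedAlgebra ℝ 𝔸] (j : Fin 4) {f g : R4 → 𝔸}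
    (hf : DifferentiableAt ℝ f x) (hg : DifferentiableAt ℝ g x) :
    pd j (fun y => f y * g y) x = f x * pd j g x + g x * pd j f x := by
  simp [pd, fderiv_fun_mul hf hg]

theorem pd_const_mul {𝔸 : Type*} [NormedRing 𝔸] [NormedAlgebra ℝ 𝔸] (j : Fin 4) (c : 𝔸)
    {f : R4 → 𝔸} (hf : DifferentiableAt ℝ f x) :
    pd j (fun y => c * f y) x = c * pd j f x := by
  simp [pd, fderiv_const_mul hf]

theorem pd_ofReal (j : Fin 4) {f : R4 → ℝ} (hf : DifferentiableAt ℝ f x) :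
    pd j (fun y => (f y : ℂ)) x = pd j f x :=
  pd_clm_comp j ofRealCLM hf

theorem pd_im (j : Fin 4) {f : R4 → ℂ} (hf : DifferentiableAt ℝ f x) :
    pd j (fun y => (f y).im) x = (pd j f x).im :=
  pd_clm_comp j imCLM hf

theorem pd_conj (j : Fin 4) {f : R4 → ℂ} (hf : DifferentiableAt ℝ f x) :
    pd j (fun y => conj (f y)) x = conj (pd j f x) :=
  pd_clm_comp j conjCLE.toContinuousLinearMap hf

theorem contDiff_pd {m n : WithTop ℕ∞} (hf : ContDiff ℝ m f) (hmn : n + 1 ≤ m) (j : Fin 4) :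
    ContDiff ℝ n (pd j f) :=
  (hf.fderiv_right hmn).clm_apply contDiff_const

theorem pd_comm (hf : ContDiff ℝ 2 f) (j k : Fin 4) (x : R4) :
    pd j (pd k f) x = pd k (pd j f) x := by
  have hf' : Differentiable ℝ (fderiv ℝ f) :=
    (hf.fderiv_right (m := 1) le_rfl).differentiable one_ne_zero
  have second : ∀ j k, pd j (pd k f) x = fderiv ℝ (fderiv ℝ f) x (bvec j) (bvec k) := fun j k =>
    pd_clm_comp j (ContinuousLinearMap.apply ℝ E (bvec k)) (hf' x)
  rw [second, second]
  exact hf.contDiffAt.isSymmSndFDerivAt (by simp [minSmoothness_of_isRCLikeNormedField]) _ _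

theorem sum_pd_sum_pd_of_antisymm {F : Fin 4 → Fin 4 → R4 → ℝ}
    (hF : ∀ j k, ContDiff ℝ 2 (F j k)) (hanti : ∀ j k, F j k = -F k j) (x : R4) :
    ∑ j, ∑ k, pd j (pd k (F k j)) x = 0 := by
  refine self_eq_neg.1 ?_
  calc ∑ j, ∑ k, pd j (pd k (F k j)) x
      = ∑ j, ∑ k, pd k (pd j (F j k)) x := Finset.sum_comm
    _ = ∑ j, ∑ k, pd j (pd k (F j k)) x := by simp only [pd_comm (hF _ _)]
    _ = -∑ j, ∑ k, pd j (pd k (F k j)) x := by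
      simp only [← Finset.sum_neg_distrib]
      refine Finset.sum_congr rfl fun j _ => Finset.sum_congr rfl fun k _ => ?_
      rw [hanti j k, pd_neg, pd_neg, Pi.neg_apply]

end PartialDerivatives

theorem contDiff_component {n : WithTop ℕ∞} {A : R4 → R4} (hA : ContDiff ℝ n A) (j : Fin 4) :
    ContDiff ℝ n (fun y => A y j) :=
  (EuclideanSpace.proj (𝕜 := ℝ) j).contDiff.comp hA

def covD (A : R4 → R4) (ψ : R4 → ℂ) (j : Fin 4) (x : R4) : ℂ :=
  pd j ψ x - I * A x j * ψ x

theorem contDiff_covD {m n : WithTop ℕ∞} {A : R4 → R4} {ψ : R4 → ℂ} (hψ : ContDiff ℝ m ψ)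
    (hA : ContDiff ℝ n A) (hmn : n + 1 ≤ m) (j : Fin 4) : ContDiff ℝ n (covD A ψ j) :=
  (contDiff_pd hψ hmn j).sub
    ((contDiff_const.mul (ofRealCLM.contDiff.comp (contDiff_component hA j))).mul
      (hψ.of_le (le_self_add.trans hmn)))

theorem contDiff_dStarDA {n : WithTop ℕ∞} {A : R4 → R4} (hA : ContDiff ℝ (n + 2) A) (j : Fin 4) :
    ContDiff ℝ n (dStarDA A j) := by
  have hAc := contDiff_component hA
  have hn : n + 1 + 1 = n + 2 := by rw [add_assoc, one_add_one_eq_two]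
  have hcurl : ∀ k,
      ContDiff ℝ (n + 1) (fun y => pd k (fun z => A z j) y - pd j (fun z => A z k) y) :=
    fun k => (contDiff_pd (hAc j) hn.le k).sub (contDiff_pd (hAc k) hn.le j)
  exact (ContDiff.sum fun k _ => contDiff_pd (hcurl k) le_rfl k).neg

section CovariantDerivative

variable {A : R4 → R4} {ψ : R4 → ℂ}

theorem pd_covD (hψ : ContDiff ℝ 2 ψ) (hA : ContDiff ℝ 1 A) (j : Fin 4) (x : R4) :
    pd j (covD A ψ j) x
      = pd j (pd j ψ) x - I * pd j (fun y => A y j) x * ψ x - I * A x j * pd j ψ x := by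
  have hAj : ContDiff ℝ 1 (fun y => (A y j : ℂ)) :=
    ofRealCLM.contDiff.comp (contDiff_component hA j)
  have hψ1 : DifferentiableAt ℝ ψ x := hψ.differentiable (by norm_num) x
  have hIA : DifferentiableAt ℝ (fun y => I * (A y j : ℂ)) x :=
    (contDiff_const.mul hAj).differentiable one_ne_zero x
  have hIAψ : DifferentiableAt ℝ (fun y => I * (A y j : ℂ) * ψ y) x := hIA.mul hψ1
  show pd j (fun y => pd j ψ y - I * A y j * ψ y) x = _
  rw [pd_sub j ((contDiff_pd hψ (by norm_num) j).differentiable one_ne_zero x) hIAψ,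
    pd_mul j hIA hψ1,
    pd_const_mul j I (hAj.differentiable one_ne_zero x),
    pd_ofReal j ((contDiff_component hA j).differentiable one_ne_zero x)]
  ring

theorem sum_covD_covD (hψ : ContDiff ℝ 2 ψ) (hA : ContDiff ℝ 1 A) (x : R4) :
    ∑ j, covD A (covD A ψ j) j x = covLap A ψ x := by
  simp only [covD, pd_covD hψ hA, covLap, lap]
  push_cast
  simp only [Finset.mul_sum, Finset.sum_mul, ← Finset.sum_sub_distrib]
  refine Finset.sum_congr rfl fun j _ => ?_
  linear_combination (ψ x * (A x j : ℂ) ^ 2) * I_sq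

theorem pd_covD_mul_conj {x : R4} (j : Fin 4) (hD : DifferentiableAt ℝ (covD A ψ j) x)
    (hψ : DifferentiableAt ℝ ψ x) :
    pd j (fun y => covD A ψ j y * conj (ψ y)) x
      = covD A (covD A ψ j) j x * conj (ψ x) + normSq (covD A ψ j x) := by
  have hψ' : DifferentiableAt ℝ (fun y => conj (ψ y)) x := hψ.star
  rw [pd_mul j hD hψ', pd_conj j hψ, ← mul_conj]
  simp only [covD, map_sub, map_mul, conj_I, conj_ofReal]
  ring

theorem im_sum_pd_covD_mul_conj (hψ : ContDiff ℝ 2 ψ) (hA : ContDiff ℝ 1 A) (x : R4) :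
    (∑ j, pd j (fun y => covD A ψ j y * conj (ψ y)) x).im = (covLap A ψ x * conj (ψ x)).im := by
  have hD : ∀ j, DifferentiableAt ℝ (covD A ψ j) x := fun j =>
    (contDiff_covD hψ hA (by norm_num) j).differentiable one_ne_zero x
  simp only [pd_covD_mul_conj _ (hD _) (hψ.differentiable (by norm_num) x), Finset.sum_add_distrib,
    ← Finset.sum_mul, sum_covD_covD hψ hA]
  simp

end CovariantDerivative

theorem sum_pd_dStarDA {A : R4 → R4} (hA : ContDiff ℝ 3 A) (x : R4) :
    ∑ j, pd j (dStarDA A j) x = 0 := by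
  set F : Fin 4 → Fin 4 → R4 → ℝ := fun k j y => pd k (fun z => A z j) y - pd j (fun z => A z k) y
  have hF : ∀ k j, ContDiff ℝ 2 (F k j) := fun k j =>
    (contDiff_pd (contDiff_component hA j) (by norm_num) k).sub
      (contDiff_pd (contDiff_component hA k) (by norm_num) j)
  have hdiv : ∀ j, pd j (dStarDA A j) x = -∑ k, pd j (pd k (F k j)) x := fun j => by
    show pd j (-fun y => ∑ k, pd k (F k j) y) x = _
    rw [pd_neg, Pi.neg_apply,
      pd_sum _ j fun k _ => (contDiff_pd (hF k j) (by norm_num) k).differentiable one_ne_zero x]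
  rw [Finset.sum_congr rfl fun j _ => hdiv j, Finset.sum_neg_distrib,
    sum_pd_sum_pd_of_antisymm hF (fun k j => by ext y; simp [F]), neg_zero]

theorem lap_eq_im_covLap_mul_conj {A : R4 → R4} {ψ : R4 → ℂ} {ξ : R4 → ℝ}
    (hψ : ContDiff ℝ 2 ψ) (hA : ContDiff ℝ 3 A)
    (hξ : ∀ j, pd j ξ = fun y => (covD A ψ j y * conj (ψ y)).im - dStarDA A j y) (x : R4) :
    lap ξ x = (covLap A ψ x * conj (ψ x)).im := by
  have hA1 : ContDiff ℝ 1 A := hA.of_le (by norm_num)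
  have hcurrent : ∀ j, ContDiff ℝ 1 (fun y => covD A ψ j y * conj (ψ y)) := fun j =>
    (contDiff_covD hψ hA1 (by norm_num) j).mul
      (conjCLE.toContinuousLinearMap.contDiff.comp (hψ.of_le (by norm_num)))
  calc lap ξ x
      = ∑ j, ((pd j (fun y => covD A ψ j y * conj (ψ y)) x).im - pd j (dStarDA A j) x) := by
        refine Finset.sum_congr rfl fun j _ => ?_
        have him : DifferentiableAt ℝ (fun y => (covD A ψ j y * conj (ψ y)).im) x :=
          (imCLM.contDiff.comp (hcurrent j)).differentiable one_ne_zero x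
        rw [hξ j, pd_sub j him
          ((contDiff_dStarDA (n := 1) hA j).differentiable one_ne_zero x),
          pd_im j ((hcurrent j).differentiable one_ne_zero x)]
    _ = (covLap A ψ x * conj (ψ x)).im := by
      rw [Finset.sum_sub_distrib, sum_pd_dStarDA hA, sub_zero, ← im_sum,
        im_sum_pd_covD_mul_conj hψ hA1]

theorem gauge_function_equation_general (lam : ℝ)
    (ψ : R4 → ℂ) (A : R4 → R4) (ξ : R4 → ℝ)
    (hψ : ContDiff ℝ (⊤ : ℕ∞) ψ) (hA : ContDiff ℝ (⊤ : ℕ∞) A)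
    (heq1 : ∀ x : R4,
      -covLap A ψ x + (((lam / 2 * ((‖ψ x‖) ^ 2 - 1) : ℝ)) : ℂ) * ψ x
        + Complex.I * (↑(ξ x) : ℂ) * ψ x = 0)
    (heq2 : ∀ (x : R4) (j : Fin 4),
      dStarDA A j x
        - ((pd j ψ x - Complex.I * (↑(A x j)) * ψ x) * (starRingEnd ℂ) (ψ x)).im
        + pd j ξ x = 0) :
    ∀ x : R4, lap ξ x = (‖ψ x‖) ^ 2 * ξ x := by
  intro x
  have hξ : ∀ j, pd j ξ = fun y => (covD A ψ j y * conj (ψ y)).im - dStarDA A j y :=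
    fun j => funext fun y => by rw [covD]; linarith [heq2 y j]
  have hcovLap : covLap A ψ x = (lam / 2 * (‖ψ x‖ ^ 2 - 1) : ℝ) * ψ x + I * ξ x * ψ x := by
    linear_combination -heq1 x
  rw [lap_eq_im_covLap_mul_conj (hψ.of_le (WithTop.coe_le_coe.2 le_top))
      (hA.of_le (WithTop.coe_le_coe.2 le_top)) hξ x,
    hcovLap, add_mul, mul_assoc, mul_assoc, mul_conj, normSq_eq_norm_sq]
  simp only [add_im, mul_im, mul_re, ofReal_re, ofReal_im, I_re, I_im]
  ring

/-- If (ψ, A, ξ) is a smooth solution of the gauge-augmented Ginzburg–Landau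
system, then Δξ = |ψ|² ξ. -/
theorem gauge_function_equation (lam : ℝ) (hlam : 0 < lam)
    (ψ : R4 → ℂ) (A : R4 → R4) (ξ : R4 → ℝ)
    (hψ : ContDiff ℝ (⊤ : ℕ∞) ψ) (hA : ContDiff ℝ (⊤ : ℕ∞) A)
    (hξ : ContDiff ℝ (⊤ : ℕ∞) ξ)
    (heq1 : ∀ x : R4,
      -covLap A ψ x + (((lam / 2 * ((‖ψ x‖) ^ 2 - 1) : ℝ)) : ℂ) * ψ x
        + Complex.I * (↑(ξ x) : ℂ) * ψ x = 0)
    (heq2 : ∀ (x : R4) (j : Fin 4),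
      dStarDA A j x
        - ((pd j ψ x - Complex.I * (↑(A x j)) * ψ x) * (starRingEnd ℂ) (ψ x)).im
        + pd j ξ x = 0) :
    ∀ x : R4, lap ξ x = (‖ψ x‖) ^ 2 * ξ x :=
  gauge_function_equation_general lam ψ A ξ hψ hA heq1 heq2

end
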